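/- Let P be the 6-prism C_6 □ K_2 with vertex set (ZMod 6) × (Fin 2), where (a, s) is adjacent to (b, t) iff (s = t and b = a ± 1) or (a = b and s ≠ t), and let M be the perfect-matching-like set of six cycle edges {(0,s),(1,s)}, {(2,s),(3,s)}, {(4,s),(5,s)} for s ∈ Fin 2 (an alternating set of cycle edges, playing the role of the b_{k−1}-edges of the prism P_6(i,k) in the Bubble-sort graph). Then for every vertex u of P and every edge e ∈ M there exists an endpoint v of e such that the distance d(u, v) in P is odd and there is a Hamiltonian path in P from u to v. -/

import Mathlib

/-!
The 6-prism is the Cayley graph of `ZMod 6 × Fin 2` with respect to `{(±1, 0), (0, 1)}`, so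
translations and negation are automorphisms. It is bipartite, so `d(u, v)` is odd exactly when
`u` and `v` have different colours, and the two endpoints of any edge have different colours:
one of them is the required `v` as soon as the prism is Hamilton-laceable. Translating `u` to `0`
and possibly negating, the pairs of differently coloured vertices reduce to four, for which the
Hamiltonian paths are written down explicitly.
-/

/-- The 6-prism on `(ZMod 6) × (Fin 2)`: `(a, s)` is adjacent to `(b, t)` iff
(`s = t` and `b = a ± 1`) or (`a = b` and `s ≠ t`). -/
def prism6 : SimpleGraph (ZMod 6 × Fin 2) where
  Adj u v := (u.2 = v.2 ∧ (v.1 = u.1 + 1 ∨ v.1 = u.1 - 1)) ∨ (u.1 = v.1 ∧ u.2 ≠ v.2)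
  symm := by
    constructor
    rintro ⟨a, s⟩ ⟨b, t⟩ h
    revert h; revert s t; revert a b; decide
  loopless := by
    constructor
    rintro ⟨a, s⟩ h
    revert h; revert s; revert a; decide

/-- The six "cycle edges" `{(0,s),(1,s)}, {(2,s),(3,s)}, {(4,s),(5,s)}`, `s ∈ Fin 2`,
playing the role of the `b_{k-1}`-edges of the prism `P_6(i,k)`. -/
def prism6M : Set (Sym2 (ZMod 6 × Fin 2)) :=
  {e | ∃ (s : Fin 2) (a : ZMod 6), (a = 0 ∨ a = 2 ∨ a = 4) ∧ e = s((a, s), (a + 1, s))}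

namespace SimpleGraph

variable {V W : Type*} {G : SimpleGraph V} {H : SimpleGraph W}

theorem Walk.exists_isHamiltonian_of_isChain [DecidableEq V] {l : List V} (hne : l ≠ [])
    (hchain : l.IsChain G.Adj) (hcount : ∀ a, l.count a = 1) :
    ∃ p : G.Walk (l.head hne) (l.getLast hne), p.IsHamiltonian :=
  ⟨.ofSupport l hne hchain, by rwa [Walk.IsHamiltonian, Walk.support_ofSupport]⟩

theorem Iso.exists_isHamiltonian [DecidableEq V] [DecidableEq W] (φ : G ≃g H) {u v : V} :
    (∃ p : G.Walk u v, p.IsHamiltonian) → ∃ p : H.Walk (φ u) (φ v), p.IsHamiltonian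
  | ⟨p, hp⟩ => ⟨p.map φ.toHom, hp.map _ φ.bijective⟩

theorem Coloring.exists_mem_ne_of_adj (c : G.Coloring Bool) {x y : V} (hxy : G.Adj x y) (u : V) :
    ∃ v ∈ s(x, y), c u ≠ c v := by
  by_cases hux : c u = c x
  · exact ⟨y, Sym2.mem_mk_right x y, hux ▸ c.valid hxy⟩
  · exact ⟨x, Sym2.mem_mk_left x y, hux⟩

theorem Coloring.odd_dist_of_ne (c : G.Coloring Bool) {u v : V} (huv : G.Reachable u v)
    (hc : c u ≠ c v) : Odd (G.dist u v) := by
  obtain ⟨p, hp⟩ := huv.exists_walk_length_eq_dist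
  rw [← hp, c.odd_length_iff_not_congr]
  cases hu : c u <;> cases hv : c v <;> simp_all

end SimpleGraph

open SimpleGraph

instance : DecidableRel prism6.Adj := fun u v =>
  inferInstanceAs <| Decidable <|
    (u.2 = v.2 ∧ (v.1 = u.1 + 1 ∨ v.1 = u.1 - 1)) ∨ (u.1 = v.1 ∧ u.2 ≠ v.2)

theorem prism6_adj_iff_sub_mem (u v : ZMod 6 × Fin 2) :
    prism6.Adj u v ↔ v - u ∈ ({(1, 0), (-1, 0), (0, 1)} : Finset (ZMod 6 × Fin 2)) := by
  revert u v; decide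

def prism6AddRight (c : ZMod 6 × Fin 2) : prism6 ≃g prism6 where
  toEquiv := Equiv.addRight c
  map_rel_iff' := by simp [prism6_adj_iff_sub_mem]

@[simp]
theorem prism6AddRight_apply (c x : ZMod 6 × Fin 2) : prism6AddRight c x = x + c := rfl

def prism6Neg : prism6 ≃g prism6 where
  toEquiv := Equiv.neg _
  map_rel_iff' {u v} := by
    simp only [Equiv.neg_apply, prism6_adj_iff_sub_mem, neg_sub_neg]
    rw [← neg_sub]
    revert v u
    decide

@[simp]
theorem prism6Neg_apply (x : ZMod 6 × Fin 2) : prism6Neg x = -x := rfl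

def prism6Coloring : prism6.Coloring Bool :=
  Coloring.mk (fun x => decide (Even (x.1.val + x.2.val))) (by decide)

theorem prism6Coloring_zero_ne_sub_of_ne {u v : ZMod 6 × Fin 2} :
    prism6Coloring u ≠ prism6Coloring v → prism6Coloring 0 ≠ prism6Coloring (v - u) := by
  revert u v; decide

def prism6LacingTargets : Finset (ZMod 6 × Fin 2) := {(1, 0), (3, 0), (0, 1), (2, 1)}

theorem prism6_exists_isHamiltonian_zero_of_mem {w : ZMod 6 × Fin 2}
    (hw : w ∈ prism6LacingTargets) : ∃ p : prism6.Walk 0 w, p.IsHamiltonian := by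
  simp only [prism6LacingTargets, Finset.mem_insert, Finset.mem_singleton] at hw
  rcases hw with rfl | rfl | rfl | rfl
  · exact Walk.exists_isHamiltonian_of_isChain (List.cons_ne_nil _ _) (by decide) (by decide)
      (l := [(0, 0), (0, 1), (5, 1), (5, 0), (4, 0), (4, 1),
        (3, 1), (3, 0), (2, 0), (2, 1), (1, 1), (1, 0)])
  · exact Walk.exists_isHamiltonian_of_isChain (List.cons_ne_nil _ _) (by decide) (by decide)
      (l := [(0, 0), (5, 0), (5, 1), (0, 1), (1, 1), (1, 0),
        (2, 0), (2, 1), (3, 1), (4, 1), (4, 0), (3, 0)])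
  · exact Walk.exists_isHamiltonian_of_isChain (List.cons_ne_nil _ _) (by decide) (by decide)
      (l := [(0, 0), (1, 0), (2, 0), (3, 0), (4, 0), (5, 0),
        (5, 1), (4, 1), (3, 1), (2, 1), (1, 1), (0, 1)])
  · exact Walk.exists_isHamiltonian_of_isChain (List.cons_ne_nil _ _) (by decide) (by decide)
      (l := [(0, 0), (0, 1), (1, 1), (1, 0), (2, 0), (3, 0),
        (4, 0), (5, 0), (5, 1), (4, 1), (3, 1), (2, 1)])

theorem prism6_exists_isHamiltonian_zero {w : ZMod 6 × Fin 2}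
    (hw : prism6Coloring 0 ≠ prism6Coloring w) : ∃ p : prism6.Walk 0 w, p.IsHamiltonian := by
  have hcases : ∀ w : ZMod 6 × Fin 2, prism6Coloring 0 ≠ prism6Coloring w →
      w ∈ prism6LacingTargets ∨ -w ∈ prism6LacingTargets := by
    decide
  rcases hcases w hw with hw | hw
  · exact prism6_exists_isHamiltonian_zero_of_mem hw
  · have := prism6Neg.exists_isHamiltonian (prism6_exists_isHamiltonian_zero_of_mem hw)
    rwa [prism6Neg_apply, prism6Neg_apply, neg_zero, neg_neg] at this

theorem prism6_exists_isHamiltonian {u v : ZMod 6 × Fin 2}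
    (huv : prism6Coloring u ≠ prism6Coloring v) : ∃ p : prism6.Walk u v, p.IsHamiltonian := by
  have := (prism6AddRight u).exists_isHamiltonian
    (prism6_exists_isHamiltonian_zero (prism6Coloring_zero_ne_sub_of_ne huv))
  rwa [prism6AddRight_apply, prism6AddRight_apply, zero_add, sub_add_cancel] at this

/-- for every vertex `u` of the 6-prism and every edge `e` of the
alternating set `M` of cycle edges, some endpoint `v` of `e` is at odd distance from `u`
and is joined to `u` by a Hamiltonian path. -/
theorem prism6_hamiltonian_path_to_matching_edge (u : ZMod 6 × Fin 2)
    (e : Sym2 (ZMod 6 × Fin 2)) (he : e ∈ prism6M) :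
    ∃ v : ZMod 6 × Fin 2, v ∈ e ∧ Odd (prism6.dist u v) ∧
      ∃ p : prism6.Walk u v, p.IsHamiltonian := by
  obtain ⟨s, a, -, rfl⟩ := he
  have hadj : prism6.Adj (a, s) (a + 1, s) := Or.inl ⟨rfl, Or.inl rfl⟩
  obtain ⟨v, hv, huv⟩ := prism6Coloring.exists_mem_ne_of_adj hadj u
  obtain ⟨p, hp⟩ := prism6_exists_isHamiltonian huv
  exact ⟨v, hv, prism6Coloring.odd_dist_of_ne ⟨p⟩ huv, p, hp⟩
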